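/- Let K be a locally compact Hausdorff cone with vertex 0 and dilation group g_λ (λ ∈ ℝ₊) fixing the vertex, such that for every compact Q ⊂ K and neighborhood V of 0, g_λ(Q) ⊂ V for all small λ. Let H̃ be a Hilbert space that is a nondegenerate *-module over C_0(K) satisfying the localization condition at the vertex, and let U_λ be a strongly continuous one-parameter unitary group on H̃ with U_λ φ U_λ^{-1} = φ ∘ g_λ for all φ ∈ C_0(K). Then U_λ converges weakly to 0 both as λ → 0 and as λ → ∞. -/

import Mathlib

open Filter Topology ZeroAtInfty

section Cone

variable {K : Type*} [TopologicalSpace K] [LocallyCompactSpace K] [T2Space K]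
variable {H : Type*} [NormedAddCommGroup H] [InnerProductSpace ℂ H] [CompleteSpace H]

/-- The axioms of a cone: a distinguished vertex together with a multiplicative
dilation group `g_λ` (`λ > 0`) fixing the vertex, such that every compact set is moved
into any given neighborhood of the vertex by all sufficiently small dilations. -/
structure ConeStruct (K : Type*) [TopologicalSpace K] where
  vertex : K
  g : ℝ → K → K
  g_cont : ∀ l : ℝ, 0 < l → Continuous (g l)
  g_one : g 1 = id
  g_mul : ∀ l m : ℝ, 0 < l → 0 < m → ∀ z, g (l * m) z = g l (g m z)
  g_vertex : ∀ l : ℝ, 0 < l → g l vertex = vertex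
  g_shrink : ∀ Q : Set K, IsCompact Q → ∀ V ∈ 𝓝 vertex,
    ∃ ε > (0:ℝ), ∀ l : ℝ, 0 < l → l < ε → g l '' Q ⊆ V

/-- The localizing class `F₀` at the vertex of the cone: compactly supported continuous
functions with values in `[0,1]` equal to `1` in a neighborhood of the vertex. -/
def coneLocClass (c : ConeStruct K) : Set C₀(K, ℂ) :=
  {φ | HasCompactSupport ⇑φ ∧ (∀ z, (φ z).re ∈ Set.Icc (0:ℝ) 1 ∧ (φ z).im = 0) ∧
    ∃ V ∈ 𝓝 c.vertex, ∀ z ∈ V, φ z = 1}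

variable (π : C₀(K, ℂ) →⋆ₙₐ[ℂ] (H →L[ℂ] H))

/-- A strongly continuous one-parameter unitary group `U_λ` (`λ > 0`). -/
def IsUnitaryDilGroup (U : ℝ → H →L[ℂ] H) : Prop :=
  U 1 = 1 ∧ (∀ l m : ℝ, 0 < l → 0 < m → U (l * m) = U l ∘L U m) ∧
    (∀ l : ℝ, 0 < l → ∀ v, ‖U l v‖ = ‖v‖) ∧
    ∀ v : H, ContinuousOn (fun l => U l v) (Set.Ioi (0:ℝ))

/-- Compatibility of the unitary group with the module structure:
`U_λ φ U_λ⁻¹ = φ ∘ g_λ`, stated as `π(φ ∘ g_λ) U_λ = U_λ π(φ)`. -/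
def DilCompatible (c : ConeStruct K) (U : ℝ → H →L[ℂ] H) : Prop :=
  ∀ l : ℝ, 0 < l → ∀ φ ψ : C₀(K, ℂ), (∀ z, ψ z = φ (c.g l z)) →
    (π ψ) ∘L (U l) = (U l) ∘L (π φ)

/-- The localization condition at the vertex: the localizing class `F₀`, directed by
`φ ≺ ψ ↔ φψ = ψ`, converges strongly to `0`. -/
def VertexLocConv (c : ConeStruct K) : Prop :=
  ∀ (v : H) (ε : ℝ), 0 < ε →
    ∃ φ ∈ coneLocClass c, ∀ ψ ∈ coneLocClass c, φ * ψ = ψ → ‖π ψ v‖ < ε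

/-- Nondegeneracy: the strong closure of the image of `C₀(K)` contains the identity. -/
def NondegenerateModule : Prop :=
  ∀ (v : H) (ε : ℝ), 0 < ε → ∃ φ : C₀(K, ℂ), ‖π φ v - v‖ < ε

end Cone

/-!
The limit `λ → 0⁺` reduces to `λ → ∞` through `⟪w, U_λ v⟫ = conj ⟪v, U_{1/λ} w⟫`.
As `λ → ∞`: by nondegeneracy `v` is approximated by vectors `π(θ) v` with `θ ∈ F₀`, uniformly
in `λ` because `U_λ` is unitary. Compatibility moves `θ` across the unitary,
`⟪w, U_λ π(θ) v⟫ = ⟪π(θ ∘ g_λ) w, U_λ v⟫`, and the support `g_{1/λ}(supp θ)` of `θ ∘ g_λ` shrinks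
into any neighbourhood of the vertex. So `θ ∘ g_λ` eventually dominates any given `φ ∈ F₀`, and the
localization condition gives `π(θ ∘ g_λ) w → 0`.
-/

namespace ConeStruct

variable {K : Type*} [TopologicalSpace K] (c : ConeStruct K)

lemma g_inv_g {l : ℝ} (hl : 0 < l) (z : K) : c.g l⁻¹ (c.g l z) = z := by
  rw [← c.g_mul _ _ (inv_pos.2 hl) hl, inv_mul_cancel₀ hl.ne', c.g_one, id]

lemma g_g_inv {l : ℝ} (hl : 0 < l) (z : K) : c.g l (c.g l⁻¹ z) = z := by
  simpa using c.g_inv_g (inv_pos.2 hl) z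

noncomputable def dilation {l : ℝ} (hl : 0 < l) : K ≃ₜ K where
  toFun := c.g l
  invFun := c.g l⁻¹
  left_inv := c.g_inv_g hl
  right_inv := c.g_g_inv hl
  continuous_toFun := c.g_cont l hl
  continuous_invFun := c.g_cont _ (inv_pos.2 hl)

/-- `θ ∘ g_l`, with the junk value `θ` for `l ≤ 0`. -/
noncomputable def dilate (l : ℝ) (θ : C₀(K, ℂ)) : C₀(K, ℂ) :=
  if hl : 0 < l then θ.comp (c.dilation hl).toCocompactMap else θ

lemma dilate_apply {l : ℝ} (hl : 0 < l) (θ : C₀(K, ℂ)) (z : K) :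
    c.dilate l θ z = θ (c.g l z) := by
  simp only [dilate, hl, dite_true]
  rfl

lemma eventually_preimage_g_subset {Q V : Set K} (hQ : IsCompact Q) (hV : V ∈ 𝓝 c.vertex) :
    ∀ᶠ l in atTop, c.g l ⁻¹' Q ⊆ V := by
  obtain ⟨ε, hε, hshrink⟩ := c.g_shrink Q hQ V hV
  filter_upwards [eventually_gt_atTop ε⁻¹] with l hl z hz
  have hl0 : 0 < l := (inv_pos.2 hε).trans hl
  rw [← c.g_inv_g hl0 z]
  exact hshrink l⁻¹ (inv_pos.2 hl0) (inv_lt_of_inv_lt₀ hε hl) ⟨_, hz, rfl⟩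

end ConeStruct

section LocClass

variable {K : Type*} [TopologicalSpace K] {c : ConeStruct K} {θ : C₀(K, ℂ)}

lemma apply_eq_ofReal_re_of_mem_coneLocClass (hθ : θ ∈ coneLocClass c) (z : K) :
    θ z = ((θ z).re : ℂ) :=
  Complex.ext rfl (by simp [(hθ.2.1 z).2])

lemma norm_apply_le_one_of_mem_coneLocClass (hθ : θ ∈ coneLocClass c) (z : K) :
    ‖θ z‖ ≤ 1 := by
  obtain ⟨⟨h0, h1⟩, -⟩ := hθ.2.1 z
  rw [apply_eq_ofReal_re_of_mem_coneLocClass hθ, Complex.norm_real, Real.norm_of_nonneg h0]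
  exact h1

lemma norm_apply_sub_one_le_one_of_mem_coneLocClass (hθ : θ ∈ coneLocClass c) (z : K) :
    ‖θ z - 1‖ ≤ 1 := by
  obtain ⟨⟨h0, h1⟩, -⟩ := hθ.2.1 z
  rw [apply_eq_ofReal_re_of_mem_coneLocClass hθ, ← Complex.ofReal_one, ← Complex.ofReal_sub,
    Complex.norm_real, Real.norm_eq_abs, abs_le]
  constructor <;> linarith

lemma norm_le_one_of_mem_coneLocClass (hθ : θ ∈ coneLocClass c) : ‖θ‖ ≤ 1 := by
  rw [← ZeroAtInftyContinuousMap.norm_toBCF_eq_norm, BoundedContinuousFunction.norm_le zero_le_one]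
  exact norm_apply_le_one_of_mem_coneLocClass hθ

lemma isSelfAdjoint_of_mem_coneLocClass (hθ : θ ∈ coneLocClass c) : IsSelfAdjoint θ := by
  ext z
  exact Complex.conj_eq_iff_im.mpr (hθ.2.1 z).2

lemma dilate_mem_coneLocClass (hθ : θ ∈ coneLocClass c) {l : ℝ} (hl : 0 < l) :
    c.dilate l θ ∈ coneLocClass c := by
  obtain ⟨hθc, hθI, Vθ, hVθ, hθV⟩ := hθ
  have hfun : ⇑(c.dilate l θ) = θ ∘ c.dilation hl := funext (c.dilate_apply hl θ)
  refine ⟨hfun ▸ hθc.comp_homeomorph _, fun z => c.dilate_apply hl θ z ▸ hθI _,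
    c.g l ⁻¹' Vθ, ?_, fun z hz => (c.dilate_apply hl θ z).trans (hθV _ hz)⟩
  exact (c.g_cont l hl).continuousAt.preimage_mem_nhds (by rwa [c.g_vertex l hl])

variable [LocallyCompactSpace K] [T2Space K]

lemma exists_mem_coneLocClass_eqOn_one (c : ConeStruct K) {S : Set K} (hS : IsCompact S) :
    ∃ θ ∈ coneLocClass c, Set.EqOn θ 1 S := by
  obtain ⟨L, hL, hSL⟩ := exists_compact_superset (hS.union (isCompact_singleton (x := c.vertex)))
  obtain ⟨f, hf1, -, hfc, hf01⟩ :=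
    exists_continuous_one_zero_of_isCompact hL isClosed_empty (Set.disjoint_empty _)
  have hfc' : HasCompactSupport (fun z => (f z : ℂ)) := hfc.comp_left Complex.ofReal_zero
  let θ : C₀(K, ℂ) := ⟨⟨fun z => (f z : ℂ), by fun_prop⟩, hfc'.is_zero_at_infty⟩
  have hθL : ∀ z ∈ interior L, θ z = 1 := fun z hz => by
    simp [θ, hf1 (interior_subset hz)]
  exact ⟨θ, ⟨hfc', fun z => by simpa [θ] using hf01 z, interior L,
    isOpen_interior.mem_nhds (hSL (Or.inr rfl)), hθL⟩, fun z hz => hθL z (hSL (Or.inl hz))⟩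

lemma exists_mem_coneLocClass_norm_mul_sub_le (c : ConeStruct K) (ρ : C₀(K, ℂ)) {δ : ℝ}
    (hδ : 0 < δ) : ∃ θ ∈ coneLocClass c, ‖θ * ρ - ρ‖ ≤ δ := by
  obtain ⟨S, hS, hρS⟩ := mem_cocompact.mp (Metric.tendsto_nhds.mp (zero_at_infty ρ) δ hδ)
  obtain ⟨θ, hθ, hθS⟩ := exists_mem_coneLocClass_eqOn_one c hS
  refine ⟨θ, hθ, ?_⟩
  rw [← ZeroAtInftyContinuousMap.norm_toBCF_eq_norm, BoundedContinuousFunction.norm_le hδ.le]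
  intro z
  change ‖θ z * ρ z - ρ z‖ ≤ δ
  by_cases hz : z ∈ S
  · simp [hθS hz, hδ.le]
  · have hρz : dist (ρ z) 0 < δ := hρS hz
    rw [dist_zero_right] at hρz
    calc ‖θ z * ρ z - ρ z‖ = ‖θ z - 1‖ * ‖ρ z‖ := by rw [← norm_mul, sub_one_mul]
      _ ≤ 1 * δ := mul_le_mul (norm_apply_sub_one_le_one_of_mem_coneLocClass hθ z)
          hρz.le (norm_nonneg _) zero_le_one
      _ = δ := one_mul δ

end LocClass

lemma tendsto_apply_of_mem_closure {ι 𝕜 E F : Type*} [NontriviallyNormedField 𝕜]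
    [SeminormedAddCommGroup E] [NormedSpace 𝕜 E] [SeminormedAddCommGroup F] [NormedSpace 𝕜 F]
    {l : Filter ι} {T : ι → E →L[𝕜] F} {C : ℝ} (hT : ∀ᶠ i in l, ‖T i‖ ≤ C) {s : Set E}
    (hs : ∀ y ∈ s, Tendsto (fun i => T i y) l (𝓝 0)) {x : E} (hx : x ∈ closure s) :
    Tendsto (fun i => T i x) l (𝓝 0) := by
  rw [NormedAddGroup.tendsto_nhds_zero]
  intro ε hε
  set δ := ε / (2 * (|C| + 1))
  have hCδ : |C| * δ < ε / 2 := by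
    rw [mul_div_assoc', div_lt_div_iff₀ (by positivity) two_pos]
    nlinarith [abs_nonneg C]
  obtain ⟨y, hy, hxy⟩ := Metric.mem_closure_iff.mp hx δ (by positivity)
  filter_upwards [hT, NormedAddGroup.tendsto_nhds_zero.mp (hs y hy) (ε / 2) (by positivity)]
    with i hTi hyi
  calc ‖T i x‖ = ‖T i (x - y) + T i y‖ := by rw [← map_add, sub_add_cancel]
    _ ≤ |C| * ‖x - y‖ + ‖T i y‖ := by
        grw [norm_add_le, (T i).le_of_opNorm_le (hTi.trans (le_abs_self C))]
    _ ≤ |C| * δ + ‖T i y‖ := by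
        gcongr
        rw [← dist_eq_norm]
        exact hxy.le
    _ < ε := by linarith

namespace IsUnitaryDilGroup

variable {H : Type*} [NormedAddCommGroup H] [InnerProductSpace ℂ H] {U : ℝ → H →L[ℂ] H}
  (hU : IsUnitaryDilGroup U) {l : ℝ}
include hU

lemma norm_le_one (hl : 0 < l) : ‖U l‖ ≤ 1 :=
  (U l).opNorm_le_bound zero_le_one fun v => by rw [hU.2.2.1 l hl, one_mul]

lemma inner_map_map (hl : 0 < l) (x y : H) : inner ℂ (U l x) (U l y) = inner ℂ x y :=
  LinearIsometry.inner_map_map ⟨(U l).toLinearMap, hU.2.2.1 l hl⟩ x y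

lemma apply_inv_apply (hl : 0 < l) (x : H) : U l (U l⁻¹ x) = x := by
  rw [← ContinuousLinearMap.comp_apply, ← hU.2.1 l l⁻¹ hl (inv_pos.2 hl),
    mul_inv_cancel₀ hl.ne', hU.1, one_apply_eq_self]

lemma inner_apply_eq_inner_inv_apply (hl : 0 < l) (v w : H) :
    inner ℂ w (U l v) = inner ℂ (U l⁻¹ w) v := by
  rw [← hU.inner_map_map hl (U l⁻¹ w) v, hU.apply_inv_apply hl]

lemma tendsto_inner_nhdsGT_zero {v w : H}
    (h : Tendsto (fun l => inner ℂ v (U l w)) atTop (𝓝 0)) :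
    Tendsto (fun l => inner ℂ w (U l v)) (𝓝[>] 0) (𝓝 0) := by
  have hconj : Tendsto (fun l : ℝ => inner ℂ (U l⁻¹ w) v) (𝓝[>] 0) (𝓝 0) := by
    simpa [Function.comp_def] using (Complex.continuous_conj.tendsto 0).comp (h.comp tendsto_inv_nhdsGT_zero)
  refine hconj.congr' ?_
  filter_upwards [self_mem_nhdsWithin] with l hl
  exact (hU.inner_apply_eq_inner_inv_apply hl v w).symm

end IsUnitaryDilGroup

section Module

variable {K : Type*} [TopologicalSpace K] {c : ConeStruct K}
  {H : Type*} [NormedAddCommGroup H] [InnerProductSpace ℂ H] [CompleteSpace H]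
  {π : C₀(K, ℂ) →⋆ₙₐ[ℂ] (H →L[ℂ] H)} {U : ℝ → H →L[ℂ] H} {l : ℝ}

lemma DilCompatible.apply_map_apply (hcomp : DilCompatible π c U) (hl : 0 < l)
    (θ : C₀(K, ℂ)) (v : H) : U l (π θ v) = π (c.dilate l θ) (U l v) :=
  (ContinuousLinearMap.ext_iff.mp (hcomp l hl θ _ (c.dilate_apply hl θ)) v).symm

lemma DilCompatible.inner_apply_map_apply (hcomp : DilCompatible π c U) (hl : 0 < l)
    {θ : C₀(K, ℂ)} (hθ : θ ∈ coneLocClass c) (v w : H) :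
    inner ℂ w (U l (π θ v)) = inner ℂ (π (c.dilate l θ) w) (U l v) := by
  rw [hcomp.apply_map_apply hl]
  exact ((isSelfAdjoint_of_mem_coneLocClass (dilate_mem_coneLocClass hθ hl)).map π).isSymmetric
    w (U l v) |>.symm

lemma VertexLocConv.tendsto_map_dilate_apply (hloc : VertexLocConv π c) {θ : C₀(K, ℂ)}
    (hθ : θ ∈ coneLocClass c) (w : H) :
    Tendsto (fun l => π (c.dilate l θ) w) atTop (𝓝 0) := by
  rw [NormedAddGroup.tendsto_nhds_zero]
  intro ε hε
  obtain ⟨φ, hφ, hφε⟩ := hloc w ε hε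
  obtain ⟨V, hV, hφV⟩ := hφ.2.2
  filter_upwards [c.eventually_preimage_g_subset hθ.1.isCompact hV, eventually_gt_atTop 0]
    with l hlV hl
  refine hφε _ (dilate_mem_coneLocClass hθ hl) ?_
  ext z
  rw [ZeroAtInftyContinuousMap.mul_apply, c.dilate_apply hl]
  by_cases hz : θ (c.g l z) = 0
  · rw [hz, mul_zero]
  · rw [hφV z (hlV (subset_tsupport _ hz)), one_mul]

variable [LocallyCompactSpace K] [T2Space K]

lemma NondegenerateModule.mem_closure_image_coneLocClass (hnd : NondegenerateModule π)
    (c : ConeStruct K) (v : H) : v ∈ closure ((fun θ => π θ v) '' coneLocClass c) := by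
  rw [Metric.mem_closure_iff]
  intro ε hε
  obtain ⟨ρ, hρ⟩ := hnd v (ε / 3) (by positivity)
  set δ := ε / (3 * (‖v‖ + 1))
  have hδv : δ * ‖v‖ < ε / 3 := by
    rw [div_mul_eq_mul_div, div_lt_div_iff₀ (by positivity) three_pos]
    nlinarith [norm_nonneg v]
  obtain ⟨θ, hθ, hθρ⟩ := exists_mem_coneLocClass_norm_mul_sub_le c ρ (δ := δ) (by positivity)
  refine ⟨π θ v, ⟨θ, hθ, rfl⟩, ?_⟩
  have hπθ : ‖π θ‖ ≤ 1 := (NonUnitalStarAlgHom.norm_apply_le π θ).trans (norm_le_one_of_mem_coneLocClass hθ)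
  have hsplit : π θ v - v = π θ (v - π ρ v) + π (θ * ρ - ρ) v + (π ρ v - v) := by
    simp only [map_sub, map_mul, sub_apply, mul_apply_eq_comp]
    abel
  rw [dist_comm, dist_eq_norm, hsplit]
  calc _ ≤ ‖π θ (v - π ρ v)‖ + ‖π (θ * ρ - ρ) v‖ + ‖π ρ v - v‖ := norm_add₃_le
    _ ≤ 1 * ‖v - π ρ v‖ + δ * ‖v‖ + ‖π ρ v - v‖ := by
        gcongr
        · exact (π θ).le_of_opNorm_le hπθ _
        · exact (π _).le_of_opNorm_le ((NonUnitalStarAlgHom.norm_apply_le π _).trans hθρ) _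
    _ < ε := by rw [one_mul, norm_sub_rev]; linarith

theorem tendsto_inner_dilation_group_atTop (hnd : NondegenerateModule π)
    (hloc : VertexLocConv π c) (hU : IsUnitaryDilGroup U) (hcomp : DilCompatible π c U)
    (v w : H) : Tendsto (fun l => inner ℂ w (U l v)) atTop (𝓝 0) := by
  refine tendsto_apply_of_mem_closure (T := fun l => (innerSL ℂ w).comp (U l)) (C := ‖w‖) ?_ ?_
    (hnd.mem_closure_image_coneLocClass c v)
  · filter_upwards [eventually_gt_atTop 0] with l hl
    calc ‖(innerSL ℂ w).comp (U l)‖ ≤ ‖innerSL ℂ w‖ * ‖U l‖ := (innerSL ℂ w).opNorm_comp_le _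
      _ ≤ ‖w‖ * 1 := by rw [innerSL_apply_norm]; gcongr; exact hU.norm_le_one hl
      _ = ‖w‖ := mul_one _
  · rintro _ ⟨θ, hθ, rfl⟩
    have hbound := (hloc.tendsto_map_dilate_apply hθ w).norm.mul_const ‖v‖
    rw [norm_zero, zero_mul] at hbound
    refine squeeze_zero_norm' ?_ hbound
    filter_upwards [eventually_gt_atTop 0] with l hl
    rw [ContinuousLinearMap.comp_apply, innerSL_apply_apply, hcomp.inner_apply_map_apply hl hθ,
      ← hU.2.2.1 l hl v]
    exact norm_inner_le_norm _ _

end Module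

/-- For a cone `K` with dilation group `g_λ`, a nondegenerate
`C₀(K)`-module Hilbert space `H` satisfying the localization condition at the vertex,
and a compatible strongly continuous one-parameter unitary group `U_λ`, the group `U_λ`
converges weakly to `0` both as `λ → 0⁺` and as `λ → ∞`. -/
theorem dilation_group_weakly_tendsto_zero
    {K : Type*} [TopologicalSpace K] [LocallyCompactSpace K] [T2Space K]
    {H : Type*} [NormedAddCommGroup H] [InnerProductSpace ℂ H] [CompleteSpace H]
    (c : ConeStruct K) (π : C₀(K, ℂ) →⋆ₙₐ[ℂ] (H →L[ℂ] H))
    (hnd : NondegenerateModule π) (hloc : VertexLocConv π c)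
    (U : ℝ → H →L[ℂ] H) (hU : IsUnitaryDilGroup U) (hcomp : DilCompatible π c U) :
    ∀ v w : H,
      Tendsto (fun l : ℝ => (inner ℂ w (U l v) : ℂ)) (𝓝[>] (0:ℝ)) (𝓝 0) ∧
      Tendsto (fun l : ℝ => (inner ℂ w (U l v) : ℂ)) atTop (𝓝 0) := fun v w =>
  ⟨hU.tendsto_inner_nhdsGT_zero (tendsto_inner_dilation_group_atTop hnd hloc hU hcomp w v),
    tendsto_inner_dilation_group_atTop hnd hloc hU hcomp v w⟩
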